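/- arXiv:1107.2464 — 4 statements merged into one kernel-verified Lean document; each statement's English description precedes it below -/
import Mathlib

section
/- Comparison theorem (SAIS dominated by SIS): Suppose p, p', q : ℝ → Fin N → ℝ are continuously differentiable, take values in [0,1], and satisfy ṗ_i = β₀(1 - p_i)Σ_j a_ij p_j - (β₀ - β_a) q_i Σ_j a_ij p_j - δ p_i and ṗ'_i = β₀(1 - p'_i)Σ_j a_ij p'_j - δ p'_i, where a_ij ≥ 0, 0 ≤ β_a ≤ β₀, δ > 0, and q_i(t) ≥ 0 for all t. If p_i(t₀) = p'_i(t₀) for all i, then p_i(t) ≤ p'_i(t) for all i and all t ≥ t₀. -/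
/-!
Let `d = p - p'`. At a time where `d j ≥ 0` is the largest component of `d`, the SAIS and SIS
vector fields differ by at most `β₀ (∑ₖ a j k) d j`: the extra SAIS term
`-(β₀ - βa) q j ∑ₖ a j k p k` is nonpositive, and `∑ₖ a j k (p k - p' k) ≤ (∑ₖ a j k) d j`.
Hence the right Dini derivative of `‖d⁺‖` (sup norm) is at most `K ‖d⁺‖` with `K = β₀ ∑ⱼ ∑ₖ a j k`, and Grönwall's
inequality with `‖d⁺ t₀‖ = 0` gives `d ≤ 0` on `[t₀, ∞)`.
-/

open Filter Set Topology Finset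

lemma eventually_lt_add_mul_sub_of_hasDerivAt {g : ℝ → ℝ} {g' m r x : ℝ}
    (hg : HasDerivAt g g' x) (hm : g x ≤ m) (hr : 0 ≤ r) (hg' : g x = m → g' < r) :
    ∀ᶠ z in 𝓝[>] x, g z < m + r * (z - x) := by
  rcases hm.lt_or_eq with hlt | heq
  · have hnear : ∀ᶠ z in 𝓝 x, g z < m := hg.continuousAt.eventually_lt continuousAt_const hlt
    filter_upwards [nhdsWithin_le_nhds hnear, self_mem_nhdsWithin] with z hz (hxz : x < z)
    nlinarith
  · have hslope : Tendsto (slope g x) (𝓝[>] x) (𝓝 g') :=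
      (hasDerivWithinAt_iff_tendsto_slope' (lt_irrefl x)).1 hg.hasDerivWithinAt
    filter_upwards [hslope.eventually_lt_const (hg' heq), self_mem_nhdsWithin]
      with z hz (hxz : x < z)
    rw [slope_def_field, div_lt_iff₀ (sub_pos.2 hxz)] at hz
    linarith

section

variable {ι : Type*} [Fintype ι]

lemma le_norm_posPart (v : ι → ℝ) (j : ι) : v j ≤ ‖v⁺‖ :=
  calc v j ≤ (v j)⁺ := le_posPart _
    _ = ‖v⁺ j‖ := (Real.norm_of_nonneg (posPart_nonneg _)).symm
    _ ≤ ‖v⁺‖ := norm_le_pi_norm _ j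

variable {u u' : ℝ → ι → ℝ} {K t₀ : ℝ}

lemma eventually_norm_posPart_lt (hK : 0 ≤ K) {x : ℝ}
    (hu : ∀ j, HasDerivAt (fun t => u t j) (u' x j) x)
    (hmax : ∀ j, 0 ≤ u x j → (∀ k, u x k ≤ u x j) → u' x j ≤ K * u x j)
    {r : ℝ} (hr : K * ‖(u x)⁺‖ < r) :
    ∀ᶠ z in 𝓝[>] x, ‖(u z)⁺‖ < ‖(u x)⁺‖ + r * (z - x) := by
  have hr₀ : 0 < r := (mul_nonneg hK (norm_nonneg _)).trans_lt hr
  have hcomp : ∀ j, ∀ᶠ z in 𝓝[>] x, u z j < ‖(u x)⁺‖ + r * (z - x) := fun j =>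
    eventually_lt_add_mul_sub_of_hasDerivAt (hu j) (le_norm_posPart _ j) hr₀.le fun heq =>
      (hmax j (heq ▸ norm_nonneg _) fun k => heq ▸ le_norm_posPart _ k).trans_lt (heq ▸ hr)
  filter_upwards [eventually_all.2 hcomp, self_mem_nhdsWithin] with z hz (hxz : x < z)
  have hpos : 0 < ‖(u x)⁺‖ + r * (z - x) := by
    nlinarith [norm_nonneg (u x)⁺, mul_pos hr₀ (sub_pos.2 hxz)]
  refine (pi_norm_lt_iff hpos).2 fun j => ?_
  rw [Pi.posPart_apply, Real.norm_of_nonneg (posPart_nonneg _)]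
  exact posPart_lt.2 ⟨hz j, hpos⟩

theorem nonpos_of_hasDerivAt_le_mul_at_max (hK : 0 ≤ K)
    (hu : ∀ x ≥ t₀, ∀ j, HasDerivAt (fun t => u t j) (u' x j) x)
    (hmax : ∀ x ≥ t₀, ∀ j, 0 ≤ u x j → (∀ k, u x k ≤ u x j) → u' x j ≤ K * u x j)
    (h₀ : ∀ j, u t₀ j ≤ 0) :
    ∀ t ≥ t₀, ∀ j, u t j ≤ 0 := by
  intro t ht j
  have hcont : ContinuousOn (fun s => ‖(u s)⁺‖) (Icc t₀ t) := fun x hx =>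
    (continuous_norm.continuousAt.comp (continuousAt_pi.2 fun j =>
      continuous_posPart.continuousAt.comp (hu x hx.1 j).continuousAt)).continuousWithinAt
  have hslope : ∀ x ∈ Ico t₀ t, ∀ r, K * ‖(u x)⁺‖ < r →
      ∃ᶠ z in 𝓝[>] x, (z - x)⁻¹ * (‖(u z)⁺‖ - ‖(u x)⁺‖) < r := by
    intro x hx r hr
    refine ((eventually_norm_posPart_lt hK (hu x hx.1) (hmax x hx.1) hr).and
      self_mem_nhdsWithin).frequently.mono fun z ⟨hz, (hxz : x < z)⟩ => ?_
    rw [inv_mul_lt_iff₀ (sub_pos.2 hxz)]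
    linarith
  have hinit : ‖(u t₀)⁺‖ ≤ 0 := by rw [posPart_eq_zero.2 h₀, norm_zero]
  have hbound := le_gronwallBound_of_liminf_deriv_right_le hcont hslope hinit
    (fun _ _ => (add_zero _).ge) t ⟨ht, le_rfl⟩
  rw [gronwallBound_ε0_δ0] at hbound
  exact (le_norm_posPart (u t) j).trans hbound

end

lemma sais_field_sub_sis_field_le {ι : Type*} [Fintype ι] {w x y : ι → ℝ} {β₀ βa δ q : ℝ}
    (hw : ∀ k, 0 ≤ w k) (hβa : 0 ≤ βa) (hβ : βa ≤ β₀) (hδ : 0 ≤ δ) (hq : 0 ≤ q)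
    (hx : ∀ k, x k ∈ Icc (0 : ℝ) 1) (hy : ∀ k, 0 ≤ y k) {j : ι}
    (hj : 0 ≤ x j - y j) (hmax : ∀ k, x k - y k ≤ x j - y j) :
    (β₀ * (1 - x j) * (∑ k, w k * x k) - (β₀ - βa) * q * (∑ k, w k * x k) - δ * x j)
      - (β₀ * (1 - y j) * (∑ k, w k * y k) - δ * y j) ≤ β₀ * (∑ k, w k) * (x j - y j) := by
  have hβ₀ : 0 ≤ β₀ := hβa.trans hβ
  have hwx : 0 ≤ ∑ k, w k * x k := sum_nonneg fun k _ => mul_nonneg (hw k) (hx k).1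
  have hwy : 0 ≤ ∑ k, w k * y k := sum_nonneg fun k _ => mul_nonneg (hw k) (hy k)
  have hcoupling : ∑ k, w k * x k - ∑ k, w k * y k ≤ (∑ k, w k) * (x j - y j) := by
    rw [← sum_sub_distrib, sum_mul]
    gcongr with k
    rw [← mul_sub]
    exact mul_le_mul_of_nonneg_left (hmax k) (hw k)
  calc _ = β₀ * (1 - x j) * (∑ k, w k * x k - ∑ k, w k * y k)
          - (β₀ * ∑ k, w k * y k + δ) * (x j - y j) - (β₀ - βa) * q * ∑ k, w k * x k := by ring
    _ ≤ β₀ * (1 - x j) * (∑ k, w k * x k - ∑ k, w k * y k) := by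
      linarith [mul_nonneg (mul_nonneg (sub_nonneg.2 hβ) hq) hwx,
        mul_nonneg (add_nonneg (mul_nonneg hβ₀ hwy) hδ) hj]
    _ ≤ β₀ * (1 - x j) * ((∑ k, w k) * (x j - y j)) :=
      mul_le_mul_of_nonneg_left hcoupling (mul_nonneg hβ₀ (sub_nonneg.2 (hx j).2))
    _ ≤ β₀ * 1 * ((∑ k, w k) * (x j - y j)) := by
      have hw_sum : 0 ≤ ∑ k, w k := sum_nonneg fun k _ => hw k
      gcongr
      linarith [(hx j).1]
    _ = β₀ * (∑ k, w k) * (x j - y j) := by ring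

theorem sais_dominated_by_sis_general (N : ℕ) (a : Fin N → Fin N → ℝ)
    (ha : ∀ i j, 0 ≤ a i j) (β₀ βa δ : ℝ)
    (hβa : 0 ≤ βa) (hβ : βa ≤ β₀) (hδ : 0 < δ)
    (t₀ : ℝ) (p p' q : ℝ → Fin N → ℝ)
    (hp01 : ∀ t i, p t i ∈ Set.Icc (0:ℝ) 1)
    (hp'01 : ∀ t i, p' t i ∈ Set.Icc (0:ℝ) 1)
    (hq0 : ∀ t i, 0 ≤ q t i)
    (hode : ∀ t i, HasDerivAt (fun t => p t i)
      (β₀ * (1 - p t i) * (∑ j, a i j * p t j)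
        - (β₀ - βa) * q t i * (∑ j, a i j * p t j) - δ * p t i) t)
    (hode' : ∀ t i, HasDerivAt (fun t => p' t i)
      (β₀ * (1 - p' t i) * (∑ j, a i j * p' t j) - δ * p' t i) t)
    (hinit : ∀ i, p t₀ i = p' t₀ i) :
    ∀ i, ∀ t, t₀ ≤ t → p t i ≤ p' t i := by
  intro i t ht
  have hβ₀ : 0 ≤ β₀ := hβa.trans hβ
  have hrow : ∀ j, ∑ k, a j k ≤ ∑ j, ∑ k, a j k := fun j =>
    single_le_sum (fun j _ => sum_nonneg fun k _ => ha j k) (mem_univ j)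
  have hK : 0 ≤ β₀ * ∑ j, ∑ k, a j k :=
    mul_nonneg hβ₀ (sum_nonneg fun j _ => sum_nonneg fun k _ => ha j k)
  have hgap := nonpos_of_hasDerivAt_le_mul_at_max (u := fun t j => p t j - p' t j) hK
    (fun x _ j => (hode x j).sub (hode' x j))
    (fun x _ j hj hmax => (sais_field_sub_sis_field_le (ha j) hβa hβ hδ.le (hq0 x j) (hp01 x)
      (fun k => (hp'01 x k).1) hj hmax).trans
        (mul_le_mul_of_nonneg_right (mul_le_mul_of_nonneg_left (hrow j) hβ₀) hj))
    (fun j => (sub_eq_zero.2 (hinit j)).le) t ht i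
  exact sub_nonpos.1 hgap

/-- comparison theorem, SAIS infection probabilities are dominated
by the SIS infection probabilities from the same initial condition. -/
theorem sais_dominated_by_sis (N : ℕ) (a : Fin N → Fin N → ℝ)
    (ha : ∀ i j, 0 ≤ a i j) (β₀ βa δ : ℝ)
    (hβa : 0 ≤ βa) (hβ : βa ≤ β₀) (hδ : 0 < δ)
    (t₀ : ℝ) (p p' q : ℝ → Fin N → ℝ)
    (hpC1 : ∀ i, ContDiff ℝ 1 (fun t => p t i))
    (hp'C1 : ∀ i, ContDiff ℝ 1 (fun t => p' t i))
    (hqC1 : ∀ i, ContDiff ℝ 1 (fun t => q t i))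
    (hp01 : ∀ t i, p t i ∈ Set.Icc (0:ℝ) 1)
    (hp'01 : ∀ t i, p' t i ∈ Set.Icc (0:ℝ) 1)
    (hq0 : ∀ t i, 0 ≤ q t i)
    (hode : ∀ t i, HasDerivAt (fun t => p t i)
      (β₀ * (1 - p t i) * (∑ j, a i j * p t j)
        - (β₀ - βa) * q t i * (∑ j, a i j * p t j) - δ * p t i) t)
    (hode' : ∀ t i, HasDerivAt (fun t => p' t i)
      (β₀ * (1 - p' t i) * (∑ j, a i j * p' t j) - δ * p' t i) t)
    (hinit : ∀ i, p t₀ i = p' t₀ i) :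
    ∀ i, ∀ t, t₀ ≤ t → p t i ≤ p' t i :=
  sais_dominated_by_sis_general N a ha β₀ βa δ hβa hβ hδ t₀ p p' q hp01 hp'01 hq0 hode hode' hinit
end

section
/- Steady-state reduction: any equilibrium (p^ss, q^ss) of the SAIS model, i.e. satisfying 0 = β₀(1-p_i^ss-q_i^ss)Σ_j a_ij p_j^ss + β_a q_i^ss Σ_j a_ij p_j^ss - δ p_i^ss and 0 = κ(1-p_i^ss-q_i^ss)Σ_j a_ij p_j^ss - β_a q_i^ss Σ_j a_ij p_j^ss, satisfies β_eq(1 - p_i^ss)Σ_j a_ij p_j^ss - δ p_i^ss = 0 for every i, where β_eq = β₀(β_a/κ)/(1+β_a/κ) + β_a/(1+β_a/κ). -/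
/-!
Writing `S = ∑ j, a i j * p j` for the infection pressure on node `i`, the SIS
residual with rate `β_eq = βa (β₀ + κ) / (κ + βa)` is a fixed linear combination of the two
SAIS residuals:
`(κ + βa) · SIS = (κ + βa) · (p-equation) + (βa - β₀) · (q-equation)`.
-/

lemma sais_equivalent_rate_eq {β₀ βa κ : ℝ} (hκ : κ ≠ 0) (hκβa : κ + βa ≠ 0) :
    β₀ * (βa / κ) / (1 + βa / κ) + βa * (1 / (1 + βa / κ)) = βa * (β₀ + κ) / (κ + βa) := by
  field_simp

lemma sis_residual_eq_zero_of_sais_residuals {β₀ βa κ δ p q S : ℝ} (hκβa : κ + βa ≠ 0)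
    (hp : β₀ * (1 - p - q) * S + βa * q * S - δ * p = 0)
    (hq : κ * (1 - p - q) * S - βa * q * S = 0) :
    βa * (β₀ + κ) / (κ + βa) * (1 - p) * S - δ * p = 0 := by
  field_simp
  linear_combination (κ + βa) * hp + (βa - β₀) * hq

theorem steady_state_reduction_general (N : ℕ) (a : Fin N → Fin N → ℝ)
    (β₀ βa κ δ : ℝ) (hκ : 0 < κ) (hβa : 0 ≤ βa)
    (pss qss : Fin N → ℝ)
    (heqp : ∀ i, β₀ * (1 - pss i - qss i) * (∑ j, a i j * pss j)
      + βa * qss i * (∑ j, a i j * pss j) - δ * pss i = 0)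
    (heqq : ∀ i, κ * (1 - pss i - qss i) * (∑ j, a i j * pss j)
      - βa * qss i * (∑ j, a i j * pss j) = 0) :
    ∀ i, (β₀ * (βa / κ) / (1 + βa / κ) + βa * (1 / (1 + βa / κ)))
      * (1 - pss i) * (∑ j, a i j * pss j) - δ * pss i = 0 := by
  have hκβa : κ + βa ≠ 0 := by positivity
  intro i
  rw [sais_equivalent_rate_eq hκ.ne' hκβa]
  exact sis_residual_eq_zero_of_sais_residuals hκβa (heqp i) (heqq i)

/-- any SAIS equilibrium satisfies the SIS steady-state equation
with the reduced infection rate β_eq. -/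
theorem steady_state_reduction (N : ℕ) (a : Fin N → Fin N → ℝ)
    (β₀ βa κ δ : ℝ) (hκ : 0 < κ) (hβa : 0 ≤ βa)
    (pss qss : Fin N → ℝ) (hp01 : ∀ i, pss i ∈ Set.Icc (0:ℝ) 1)
    (heqp : ∀ i, β₀ * (1 - pss i - qss i) * (∑ j, a i j * pss j)
      + βa * qss i * (∑ j, a i j * pss j) - δ * pss i = 0)
    (heqq : ∀ i, κ * (1 - pss i - qss i) * (∑ j, a i j * pss j)
      - βa * qss i * (∑ j, a i j * pss j) = 0) :
    ∀ i, (β₀ * (βa / κ) / (1 + βa / κ) + βa * (1 / (1 + βa / κ)))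
      * (1 - pss i) * (∑ j, a i j * pss j) - δ * pss i = 0 :=
  steady_state_reduction_general N a β₀ βa κ δ hκ hβa pss qss heqp heqq
end

section
/- SIS exponential die-out (linear comparison): let A be a symmetric nonnegative N×N matrix, β₀, δ > 0 with β₀ ρ(A) < δ. If p : ℝ → ℝ^N is C¹ with 0 ≤ p_i(t) ≤ 1 and ṗ_i = β₀(1 - p_i)Σ_j A_ij p_j - δ p_i, then ‖p(t)‖ ≤ ‖p(0)‖ e^{(β₀ρ(A) - δ)t} for all t ≥ 0; in particular p(t) → 0 exponentially. -/
/-!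
Write `F` for the SIS vector field and `V = ‖p‖²`, so that `V' = 2 ⟪p, F p⟫`. On `[0,1]^N` the
factor `1 - pᵢ` only shrinks the nonnegative infection term, hence
`⟪p, F p⟫ ≤ β₀ ⟪p, A p⟫ - δ ‖p‖² ≤ (β₀ ρ - δ) ‖p‖²`, the last step because `ρ • 1 - A` is positive
semidefinite when `ρ` bounds the spectrum of the symmetric matrix `A`. Grönwall's inequality gives
`V t ≤ V 0 · exp (2 (β₀ ρ - δ) t)`; take square roots.
-/
open Matrix Real Set

theorem Matrix.IsHermitian.dotProduct_mulVec_le {n : Type*} [Fintype n] [DecidableEq n]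
    {A : Matrix n n ℝ} (hA : A.IsHermitian) {ρ : ℝ} (hρ : ∀ μ ∈ spectrum ℝ A, μ ≤ ρ)
    (x : n → ℝ) : x ⬝ᵥ A *ᵥ x ≤ ρ * (x ⬝ᵥ x) := by
  open scoped MatrixOrder in
  have hpsd : (algebraMap ℝ (Matrix n n ℝ) ρ - A).PosSemidef :=
    Matrix.le_iff.mp (le_algebraMap_of_spectrum_le hρ hA.isSelfAdjoint)
  have := hpsd.dotProduct_mulVec_nonneg x
  rwa [Algebra.algebraMap_eq_smul_one, star_trivial, sub_mulVec, smul_mulVec, one_mulVec,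
    dotProduct_sub, dotProduct_smul, smul_eq_mul, sub_nonneg] at this

theorem le_mul_exp_of_hasDerivAt_le_mul {f f' : ℝ → ℝ} {K : ℝ}
    (hf : ∀ t, 0 ≤ t → HasDerivAt f (f' t) t) (bound : ∀ t, 0 ≤ t → f' t ≤ K * f t)
    {t : ℝ} (ht : 0 ≤ t) : f t ≤ f 0 * exp (K * t) := by
  have hcont : ContinuousOn f (Icc 0 t) := fun s hs => (hf s hs.1).continuousAt.continuousWithinAt
  have key := le_gronwallBound_of_liminf_deriv_right_le (ε := 0) hcont
    (fun s hs _ hr => by simpa [slope_def_field, div_eq_inv_mul] using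
      (hf s hs.1).hasDerivWithinAt.liminf_right_slope_le hr)
    le_rfl (fun s hs => by simpa using bound s hs.1) t ⟨ht, le_rfl⟩
  simpa [gronwallBound_ε0] using key

def sisField {n : Type*} [Fintype n] (β δ : ℝ) (A : Matrix n n ℝ) (x : n → ℝ) : n → ℝ :=
  fun i => β * (1 - x i) * (A *ᵥ x) i - δ * x i

theorem dotProduct_sisField_le {n : Type*} [Fintype n] [DecidableEq n] {A : Matrix n n ℝ}
    (hA : A.IsHermitian) (hA0 : ∀ i j, 0 ≤ A i j) {β δ ρ : ℝ} (hβ : 0 ≤ β)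
    (hρ : ∀ μ ∈ spectrum ℝ A, μ ≤ ρ) {x : n → ℝ} (hx : ∀ i, x i ∈ Icc 0 1) :
    x ⬝ᵥ sisField β δ A x ≤ (β * ρ - δ) * (x ⬝ᵥ x) := by
  have hAx : ∀ i, 0 ≤ (A *ᵥ x) i := fun i =>
    Finset.sum_nonneg fun j _ => mul_nonneg (hA0 i j) (hx j).1
  calc x ⬝ᵥ sisField β δ A x ≤ β * (x ⬝ᵥ A *ᵥ x) - δ * (x ⬝ᵥ x) := by
        simp only [dotProduct, sisField, Finset.mul_sum, ← Finset.sum_sub_distrib]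
        refine Finset.sum_le_sum fun i _ => ?_
        have := mul_nonneg (mul_nonneg hβ (hAx i)) (sq_nonneg (x i))
        linarith
    _ ≤ β * (ρ * (x ⬝ᵥ x)) - δ * (x ⬝ᵥ x) := by
        gcongr; exact hA.dotProduct_mulVec_le hρ x
    _ = (β * ρ - δ) * (x ⬝ᵥ x) := by ring

theorem sis_exponential_dieout_general (N : ℕ) (A : Matrix (Fin N) (Fin N) ℝ)
    (hA : A.IsSymm) (hA0 : ∀ i j, 0 ≤ A i j)
    (β₀ δ ρ : ℝ) (hβ₀ : 0 < β₀)
    (hρ : ∀ μ ∈ spectrum ℝ A, |μ| ≤ ρ)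
    (p : ℝ → Fin N → ℝ)
    (hp01 : ∀ t i, p t i ∈ Set.Icc (0:ℝ) 1)
    (hode : ∀ t i, HasDerivAt (fun t => p t i)
      (β₀ * (1 - p t i) * (∑ j, A i j * p t j) - δ * p t i) t) :
    ∀ t, 0 ≤ t →
      Real.sqrt (∑ i, (p t i)^2)
        ≤ Real.sqrt (∑ i, (p 0 i)^2) * Real.exp ((β₀ * ρ - δ) * t) := by
  intro t ht
  have hsq : ∀ x : Fin N → ℝ, x ⬝ᵥ x = ∑ i, x i ^ 2 := fun x => by simp [dotProduct, sq]
  have hderiv : ∀ s, HasDerivAt (fun s => ∑ i, p s i ^ 2)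
      (2 * (p s ⬝ᵥ sisField β₀ δ A (p s))) s := fun s => by
    refine (HasDerivAt.fun_sum (u := .univ) fun i _ => (hode s i).fun_pow 2).congr_deriv ?_
    simp only [dotProduct, sisField, mulVec, Finset.mul_sum]
    exact Finset.sum_congr rfl fun i _ => by push_cast; ring
  have hbound : ∀ s, 2 * (p s ⬝ᵥ sisField β₀ δ A (p s)) ≤ 2 * (β₀ * ρ - δ) * ∑ i, p s i ^ 2 :=
    fun s => by
      rw [mul_assoc, ← hsq]
      exact mul_le_mul_of_nonneg_left (dotProduct_sisField_le (isHermitian_iff_isSymm.mpr hA) hA0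
        hβ₀.le (fun μ hμ => le_of_abs_le (hρ μ hμ)) (hp01 s)) zero_le_two
  have hV := le_mul_exp_of_hasDerivAt_le_mul (fun s _ => hderiv s) (fun s _ => hbound s) ht
  calc √(∑ i, p t i ^ 2) ≤ √((∑ i, p 0 i ^ 2) * exp (2 * (β₀ * ρ - δ) * t)) := sqrt_le_sqrt hV
    _ = √(∑ i, p 0 i ^ 2) * exp ((β₀ * ρ - δ) * t) := by
        rw [sqrt_mul (Finset.sum_nonneg fun i _ => sq_nonneg _), mul_assoc, two_mul, exp_add,
          sqrt_mul_self (exp_pos _).le]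

/-- SIS exponential die-out below the threshold:
‖p(t)‖ ≤ ‖p(0)‖ e^{(β₀ρ(A)-δ)t} for t ≥ 0. -/
theorem sis_exponential_dieout (N : ℕ) (A : Matrix (Fin N) (Fin N) ℝ)
    (hA : A.IsSymm) (hA0 : ∀ i j, 0 ≤ A i j)
    (β₀ δ ρ : ℝ) (hβ₀ : 0 < β₀) (hδ : 0 < δ)
    (hρ : ∀ μ ∈ spectrum ℝ A, |μ| ≤ ρ) (hthr : β₀ * ρ < δ)
    (p : ℝ → Fin N → ℝ)
    (hC1 : ∀ i, ContDiff ℝ 1 (fun t => p t i))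
    (hp01 : ∀ t i, p t i ∈ Set.Icc (0:ℝ) 1)
    (hode : ∀ t i, HasDerivAt (fun t => p t i)
      (β₀ * (1 - p t i) * (∑ j, A i j * p t j) - δ * p t i) t) :
    ∀ t, 0 ≤ t →
      Real.sqrt (∑ i, (p t i)^2)
        ≤ Real.sqrt (∑ i, (p 0 i)^2) * Real.exp ((β₀ * ρ - δ) * t) :=
  sis_exponential_dieout_general N A hA hA0 β₀ δ ρ hβ₀ hρ p hp01 hode
end

section
/- Invariance of the probability simplex region: if p, q : ℝ → ℝ^N solve the SAIS equations ṗ_i = β₀(1-p_i-q_i)Σ a_ij p_j + β_a q_i Σ a_ij p_j - δ p_i, q̇_i = κ(1-p_i-q_i)Σ a_ij p_j - β_a q_i Σ a_ij p_j with a_ij ≥ 0, β₀, β_a, κ, δ ≥ 0, and initially p_i(0) ≥ 0, q_i(0) ≥ 0, p_i(0)+q_i(0) ≤ 1 for all i, then p_i(t) ≥ 0, q_i(t) ≥ 0, and p_i(t)+q_i(t) ≤ 1 for all t ≥ 0 and all i. -/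
/-!
Adding the susceptible fraction `1 - p i - q i` as a third compartment turns the region into the
nonnegative orthant, and the SAIS vector field is quasi-positive there: each component is
nonnegative at a nonnegative point where that coordinate vanishes. For a locally Lipschitz
quasi-positive field `f` and a trajectory `x`, the total violation `F = ∑ k, max (-x k) 0` has right
derivative at most `card ι * L * F`: where `x k ≤ 0`, `-f x k` exceeds `-f x⁺ k ≤ 0` by at most
`L * ‖x - x⁺‖ ≤ L * F`, with `x⁺` the positive part of `x`. Gronwall's inequality and `F 0 = 0`
then give `F ≡ 0`.
-/

open Filter Set Topology
open scoped NNReal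

def IsQuasiPositive {ι : Type*} (f : (ι → ℝ) → ι → ℝ) : Prop :=
  ∀ y, 0 ≤ y → ∀ k, y k = 0 → 0 ≤ f y k

noncomputable def posPartRightDeriv (g₀ d : ℝ) : ℝ :=
  if g₀ < 0 then 0 else if g₀ = 0 then max d 0 else d

theorem posPartRightDeriv_le {g₀ d C : ℝ} (hC : 0 ≤ C) (h : 0 ≤ g₀ → d ≤ C) :
    posPartRightDeriv g₀ d ≤ C := by
  unfold posPartRightDeriv
  split_ifs with hneg hzero
  · exact hC
  · exact max_le (h hzero.ge) hC
  · exact h (not_lt.1 hneg)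

theorem HasDerivWithinAt.max_zero_Ici {g : ℝ → ℝ} {d x : ℝ}
    (hg : HasDerivWithinAt g d (Ici x) x) :
    HasDerivWithinAt (fun z => max (g z) 0) (posPartRightDeriv (g x) d) (Ici x) x := by
  rw [← hasDerivWithinAt_Ioi_iff_Ici] at hg ⊢
  have hcont : Tendsto g (𝓝[>] x) (𝓝 (g x)) := hg.continuousWithinAt
  unfold posPartRightDeriv
  split_ifs with hneg hzero
  · refine (hasDerivWithinAt_const x _ 0).congr_of_eventuallyEq ?_ (max_eq_right hneg.le)
    filter_upwards [hcont.eventually_lt_const hneg] with z hz using max_eq_right hz.le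
  · rw [hasDerivWithinAt_iff_tendsto_slope' self_notMem_Ioi] at hg ⊢
    refine (((continuous_id.max continuous_const).tendsto d).comp hg).congr' ?_
    filter_upwards [self_mem_nhdsWithin] with z (hz : x < z)
    simp only [Function.comp_apply, id, slope_def_field, hzero, max_self, sub_zero]
    rw [← max_div_div_right (sub_pos.2 hz).le, zero_div]
  · have hpos : 0 < g x := lt_of_le_of_ne (not_lt.1 hneg) (Ne.symm hzero)
    refine hg.congr_of_eventuallyEq ?_ (max_eq_left hpos.le)
    filter_upwards [hcont.eventually_const_lt hpos] with z hz using max_eq_left hz.le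

theorem IsQuasiPositive.neg_apply_le {ι : Type*} [Fintype ι] {f : (ι → ℝ) → ι → ℝ}
    (hf₀ : IsQuasiPositive f) {s : Set (ι → ℝ)} {L : ℝ≥0} (hf : LipschitzOnWith L f s)
    {y : ι → ℝ} (hy : y ∈ s) (hyp : (fun j => max (y j) 0) ∈ s) {k : ι} (hk : y k ≤ 0) :
    -f y k ≤ L * ∑ j, max (-y j) 0 := by
  set yp : ι → ℝ := fun j => max (y j) 0
  have hfyp : 0 ≤ f yp k := hf₀ yp (fun j => le_max_right _ _) k (max_eq_right hk)
  have hdist : ‖y - yp‖ ≤ ∑ j, max (-y j) 0 := by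
    refine (pi_norm_le_iff_of_nonneg (by positivity)).2 fun j => ?_
    calc ‖y j - yp j‖ = max (-y j) 0 := by
          simp only [yp, Real.norm_eq_abs]
          rcases le_total (y j) 0 with h | h <;> simp [h, abs_of_nonpos]
      _ ≤ ∑ j, max (-y j) 0 :=
          Finset.single_le_sum (f := fun j => max (-y j) 0) (fun _ _ => le_max_right _ _)
            (Finset.mem_univ j)
  have hk_le : |f y k - f yp k| ≤ L * ‖y - yp‖ :=
    (norm_le_pi_norm (f y - f yp) k).trans (hf.norm_sub_le hy hyp)
  have := mul_le_mul_of_nonneg_left hdist L.coe_nonneg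
  have := neg_abs_le (f y k - f yp k)
  linarith

theorem IsQuasiPositive.nonneg_of_hasDerivWithinAt {ι : Type*} [Fintype ι]
    {f : (ι → ℝ) → ι → ℝ} (hf₀ : IsQuasiPositive f) (hf : LocallyLipschitz f)
    {x : ℝ → ι → ℝ} {a b : ℝ} (hx : ContinuousOn x (Icc a b))
    (hx' : ∀ t ∈ Ico a b, HasDerivWithinAt x (f (x t)) (Ici t) t) (ha : 0 ≤ x a) :
    ∀ t ∈ Icc a b, 0 ≤ x t := by
  set xp : ℝ → ι → ℝ := fun s j => max (x s j) 0
  have hxp : ContinuousOn xp (Icc a b) :=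
    continuousOn_pi.2 fun j => ContinuousOn.sup (continuousOn_pi.1 hx j) continuousOn_const
  obtain ⟨L, hL⟩ := hf.locallyLipschitzOn.exists_lipschitzOnWith_of_compact
    ((isCompact_Icc.image_of_continuousOn hx).union (isCompact_Icc.image_of_continuousOn hxp))
  set F : ℝ → ℝ := fun s => ∑ k, max (-x s k) 0
  set F' : ℝ → ℝ := fun s => ∑ k, posPartRightDeriv (-x s k) (-f (x s) k)
  have hF : ContinuousOn F (Icc a b) :=
    continuousOn_finsetSum _ fun k _ =>
      ContinuousOn.sup (continuousOn_pi.1 hx k).neg continuousOn_const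
  have hF' : ∀ s ∈ Ico a b, HasDerivWithinAt F (F' s) (Ici s) s := fun s hs =>
    HasDerivWithinAt.fun_sum fun k _ => (hasDerivWithinAt_pi.1 (hx' s hs) k).neg.max_zero_Ici
  have hF'_le : ∀ s ∈ Ico a b, F' s ≤ (Fintype.card ι * L) * F s + 0 := by
    intro s hs
    have hs' := Ico_subset_Icc_self hs
    have hF0 : 0 ≤ F s := Finset.sum_nonneg fun k _ => le_max_right _ _
    calc F' s ≤ Fintype.card ι • (L * F s) :=
          Finset.sum_le_card_nsmul _ _ _ fun k _ =>
            posPartRightDeriv_le (by positivity) fun hk =>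
              hf₀.neg_apply_le hL (Or.inl ⟨s, hs', rfl⟩) (Or.inr ⟨s, hs', rfl⟩)
                (neg_nonneg.1 hk)
      _ = _ := by rw [nsmul_eq_mul]; ring
  have hFa : F a ≤ 0 := Finset.sum_nonpos fun k _ => max_le (neg_nonpos.2 (ha k)) le_rfl
  have hF_slope : ∀ s ∈ Ico a b, ∀ r, F' s < r →
      ∃ᶠ z in 𝓝[>] s, (z - s)⁻¹ * (F z - F s) < r := fun s hs r hr =>
    (((hasDerivWithinAt_iff_tendsto_slope' self_notMem_Ioi).1
      (hasDerivWithinAt_Ioi_iff_Ici.2 (hF' s hs))).eventually_lt_const hr).frequently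
  intro t ht k
  have hFt := le_gronwallBound_of_liminf_deriv_right_le hF hF_slope hFa hF'_le t ht
  rw [gronwallBound_ε0_δ0] at hFt
  have hk : max (-x t k) 0 ≤ F t :=
    Finset.single_le_sum (f := fun k => max (-x t k) 0) (fun _ _ => le_max_right _ _)
      (Finset.mem_univ k)
  have := le_max_left (-x t k) 0
  exact neg_nonpos.1 (by linarith)

namespace SAIS

variable {N : ℕ}

/-- Compartment `(0, i)` holds the infected fraction `p i`, `(1, i)` the alert fraction `q i` and
`(2, i)` the susceptible fraction `1 - p i - q i` of node `i`. -/
def state (p q : Fin N → ℝ) : Fin 3 × Fin N → ℝ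
  | (0, i) => p i
  | (1, i) => q i
  | (2, i) => 1 - p i - q i

def infectionPressure (a : Fin N → Fin N → ℝ) (y : Fin 3 × Fin N → ℝ) (i : Fin N) : ℝ :=
  ∑ j, a i j * y (0, j)

def field (a : Fin N → Fin N → ℝ) (β₀ βa κ δ : ℝ) (y : Fin 3 × Fin N → ℝ) :
    Fin 3 × Fin N → ℝ
  | (0, i) => β₀ * y (2, i) * infectionPressure a y i + βa * y (1, i) * infectionPressure a y i
      - δ * y (0, i)
  | (1, i) => κ * y (2, i) * infectionPressure a y i - βa * y (1, i) * infectionPressure a y i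
  | (2, i) => -((β₀ + κ) * y (2, i) * infectionPressure a y i) + δ * y (0, i)

theorem contDiff_field (a : Fin N → Fin N → ℝ) (β₀ βa κ δ : ℝ) :
    ContDiff ℝ 1 (field a β₀ βa κ δ) := by
  refine contDiff_pi.2 fun ⟨c, i⟩ => ?_
  fin_cases c <;> simp only [field, infectionPressure] <;> fun_prop

theorem isQuasiPositive_field {a : Fin N → Fin N → ℝ} (ha : ∀ i j, 0 ≤ a i j) {β₀ βa κ δ : ℝ}
    (hβ₀ : 0 ≤ β₀) (hβa : 0 ≤ βa) (hκ : 0 ≤ κ) (hδ : 0 ≤ δ) :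
    IsQuasiPositive (field a β₀ βa κ δ) := by
  intro y hy k hk
  have hS (i : Fin N) : 0 ≤ infectionPressure a y i :=
    Finset.sum_nonneg fun j _ => mul_nonneg (ha i j) (hy _)
  match k, hk with
  | (0, i), hk =>
    simp only [field, hk, mul_zero, sub_zero]
    exact add_nonneg (mul_nonneg (mul_nonneg hβ₀ (hy _)) (hS i))
      (mul_nonneg (mul_nonneg hβa (hy _)) (hS i))
  | (1, i), hk =>
    simp only [field, hk, mul_zero, zero_mul, sub_zero]
    exact mul_nonneg (mul_nonneg hκ (hy _)) (hS i)
  | (2, i), hk =>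
    simp only [field, hk, mul_zero, zero_mul, neg_zero, zero_add]
    exact mul_nonneg hδ (hy _)

theorem hasDerivAt_state {a : Fin N → Fin N → ℝ} {β₀ βa κ δ : ℝ} {p q : ℝ → Fin N → ℝ} {t : ℝ}
    (hp : ∀ i, HasDerivAt (fun t => p t i)
      (β₀ * (1 - p t i - q t i) * (∑ j, a i j * p t j)
        + βa * q t i * (∑ j, a i j * p t j) - δ * p t i) t)
    (hq : ∀ i, HasDerivAt (fun t => q t i)
      (κ * (1 - p t i - q t i) * (∑ j, a i j * p t j)
        - βa * q t i * (∑ j, a i j * p t j)) t) :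
    HasDerivAt (fun t => state (p t) (q t)) (field a β₀ βa κ δ (state (p t) (q t))) t := by
  refine hasDerivAt_pi.2 fun ⟨c, i⟩ => ?_
  fin_cases c
  · exact hp i
  · exact hq i
  · convert ((hp i).add (hq i)).const_sub 1 using 1
    · ext s; simp only [state, Pi.add_apply]; ring
    · simp only [field, state, infectionPressure]; ring

end SAIS

open SAIS in
theorem sais_invariance_general (N : ℕ) (a : Fin N → Fin N → ℝ)
    (ha : ∀ i j, 0 ≤ a i j) (β₀ βa κ δ : ℝ)
    (hβ₀ : 0 ≤ β₀) (hβa : 0 ≤ βa) (hκ : 0 ≤ κ) (hδ : 0 ≤ δ)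
    (p q : ℝ → Fin N → ℝ)
    (hode_p : ∀ t i, HasDerivAt (fun t => p t i)
      (β₀ * (1 - p t i - q t i) * (∑ j, a i j * p t j)
        + βa * q t i * (∑ j, a i j * p t j) - δ * p t i) t)
    (hode_q : ∀ t i, HasDerivAt (fun t => q t i)
      (κ * (1 - p t i - q t i) * (∑ j, a i j * p t j)
        - βa * q t i * (∑ j, a i j * p t j)) t)
    (hinit : ∀ i, 0 ≤ p 0 i ∧ 0 ≤ q 0 i ∧ p 0 i + q 0 i ≤ 1) :
    ∀ t, 0 ≤ t → ∀ i, 0 ≤ p t i ∧ 0 ≤ q t i ∧ p t i + q t i ≤ 1 := by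
  intro t ht i
  have hx (s : ℝ) := hasDerivAt_state (hode_p s) (hode_q s)
  have hx₀ : 0 ≤ state (p 0) (q 0) := by
    rintro ⟨c, i⟩
    obtain ⟨hp, hq, hpq⟩ := hinit i
    fin_cases c <;> simp only [Pi.zero_apply, state] <;> linarith
  have hxt := (isQuasiPositive_field ha hβ₀ hβa hκ hδ).nonneg_of_hasDerivWithinAt
    (contDiff_field a β₀ βa κ δ).locallyLipschitz
    (fun s _ => (hx s).continuousAt.continuousWithinAt) (fun s _ => (hx s).hasDerivWithinAt) hx₀
    t ⟨ht, le_rfl⟩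
  have hs : 0 ≤ 1 - p t i - q t i := hxt (2, i)
  exact ⟨hxt (0, i), hxt (1, i), by linarith⟩

/-- forward invariance of {(p,q) : p_i ≥ 0, q_i ≥ 0, p_i+q_i ≤ 1}
for the SAIS mean-field system. -/
theorem sais_invariance (N : ℕ) (a : Fin N → Fin N → ℝ)
    (ha : ∀ i j, 0 ≤ a i j) (β₀ βa κ δ : ℝ)
    (hβ₀ : 0 ≤ β₀) (hβa : 0 ≤ βa) (hκ : 0 ≤ κ) (hδ : 0 ≤ δ)
    (p q : ℝ → Fin N → ℝ)
    (hpC1 : ∀ i, ContDiff ℝ 1 (fun t => p t i))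
    (hqC1 : ∀ i, ContDiff ℝ 1 (fun t => q t i))
    (hode_p : ∀ t i, HasDerivAt (fun t => p t i)
      (β₀ * (1 - p t i - q t i) * (∑ j, a i j * p t j)
        + βa * q t i * (∑ j, a i j * p t j) - δ * p t i) t)
    (hode_q : ∀ t i, HasDerivAt (fun t => q t i)
      (κ * (1 - p t i - q t i) * (∑ j, a i j * p t j)
        - βa * q t i * (∑ j, a i j * p t j)) t)
    (hinit : ∀ i, 0 ≤ p 0 i ∧ 0 ≤ q 0 i ∧ p 0 i + q 0 i ≤ 1) :
    ∀ t, 0 ≤ t → ∀ i, 0 ≤ p t i ∧ 0 ≤ q t i ∧ p t i + q t i ≤ 1 :=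
  sais_invariance_general N a ha β₀ βa κ δ hβ₀ hβa hκ hδ p q hode_p hode_q hinit
end
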